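/- Let Γ be a δ-hyperbolic connected graph and let 𝓗 be a factor system for Γ. Then there exists Θ (depending on the factor-system constants; one may take Θ = 2B + ξ + 2) such that for every pair F, W ∈ 𝓗 at least one of the following holds: (i) diam_{F̂}( π_F(W) ) ≤ Θ, or (ii) F ⊆ W. -/

import Mathlib

universe u

open SimpleGraph

/-- The cone-off of a graph `G` with respect to a family `𝓗` of (vertex sets of)
subgraphs: an edge is added between each pair of distinct vertices of each `S ∈ 𝓗`. -/
def coneOff {V : Type u} (G : SimpleGraph V) (𝓗 : Set (Set V)) : SimpleGraph V where
  Adj a b := G.Adj a b ∨ (a ≠ b ∧ ∃ S ∈ 𝓗, a ∈ S ∧ b ∈ S)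
  symm := by
    constructor
    intro a b hab
    rcases hab with h | ⟨hne, S, hS, ha, hb⟩
    · exact Or.inl h.symm
    · exact Or.inr ⟨hne.symm, S, hS, hb, ha⟩
  loopless := by
    constructor
    intro a ha
    rcases ha with h | ⟨hne, -⟩
    · exact G.loopless.irrefl a h
    · exact hne rfl

/-- `δ`-hyperbolicity of a graph via `δ`-slim geodesic triangles
(geodesics being shortest-path walks). -/
def GraphHyperbolic {V : Type u} (G : SimpleGraph V) (δ : ℝ) : Prop :=
  ∀ (x y z : V) (p : G.Walk x y) (q : G.Walk y z) (r : G.Walk x z),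
    p.length = G.dist x y → q.length = G.dist y z → r.length = G.dist x z →
    ∀ v ∈ r.support, ∃ w, (w ∈ p.support ∨ w ∈ q.support) ∧ (G.dist v w : ℝ) ≤ δ

/-- A de-electrification datum: `g` is a `G`-walk obtained from the walk `γ` of the
cone-off by replacing each `𝓗`-component (the edges indexed by `C`) by a `G`-geodesic
between its endpoints; `φ` maps positions along `γ` to positions along `g`. -/
def IsDeelectrification {V : Type u} (G : SimpleGraph V) (𝓗 : Set (Set V)) {x y : V}
    (γ : (coneOff G 𝓗).Walk x y) (g : G.Walk x y) (φ : ℕ → ℕ) (C : Set ℕ) : Prop :=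
  φ 0 = 0 ∧ φ γ.length = g.length ∧
    (∀ i ≤ γ.length, g.getVert (φ i) = γ.getVert i) ∧
    (∀ i < γ.length, i ∈ C →
      (∃ S ∈ 𝓗, γ.getVert i ∈ S ∧ γ.getVert (i + 1) ∈ S) ∧
      φ (i + 1) = φ i + G.dist (γ.getVert i) (γ.getVert (i + 1))) ∧
    (∀ i < γ.length, i ∉ C →
      G.Adj (γ.getVert i) (γ.getVert (i + 1)) ∧ φ (i + 1) = φ i + 1)

/-- The cone-off `Ŵ` of (the subgraph induced on) `W` with respect to the family
`𝓗_W = {U ∈ 𝓗 | U ⊊ W}`, realized as a graph on the ambient vertex set (vertices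
outside `W` are isolated). -/
def hatG {V : Type u} (G : SimpleGraph V) (𝓗 : Set (Set V)) (W : Set V) : SimpleGraph V where
  Adj a b := a ∈ W ∧ b ∈ W ∧
    (G.Adj a b ∨ (a ≠ b ∧ ∃ U ∈ 𝓗, U ⊂ W ∧ a ∈ U ∧ b ∈ U))
  symm := by
    constructor
    intro a b hab
    obtain ⟨ha, hb, h | ⟨hne, U, hU, hUW, haU, hbU⟩⟩ := hab
    · exact ⟨hb, ha, Or.inl h.symm⟩
    · exact ⟨hb, ha, Or.inr ⟨hne.symm, U, hU, hUW, hbU, haU⟩⟩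
  loopless := by
    constructor
    intro a ha
    obtain ⟨-, -, h | ⟨hne, -⟩⟩ := ha
    · exact G.loopless.irrefl a h
    · exact hne rfl

/-- Closest-point projection (in the graph metric of `G`) of the vertex `x` to `W`. -/
def gProjSet {V : Type u} (G : SimpleGraph V) (W : Set V) (x : V) : Set V :=
  {w ∈ W | ∀ w' ∈ W, G.dist x w ≤ G.dist x w'}

/-- Closest-point projection (in the graph metric of `G`) of the set `S` to `W`. -/
def gProjSetOf {V : Type u} (G : SimpleGraph V) (W S : Set V) : Set V :=
  ⋃ s ∈ S, gProjSet G W s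

/-- The Hausdorff distance between `S` and `T` in the graph metric of `G` is at most `d`. -/
def GHausBound {V : Type u} (G : SimpleGraph V) (d : ℝ) (S T : Set V) : Prop :=
  (∀ s ∈ S, ∃ t ∈ T, (G.dist s t : ℝ) ≤ d) ∧
  (∀ t ∈ T, ∃ s ∈ S, (G.dist t s : ℝ) ≤ d)

/-- A factor system `𝓗` for the graph `G`, with constants `K, c, ξ, B`
(Definition 3.1). -/
structure FactorSystem {V : Type u} (G : SimpleGraph V) (𝓗 : Set (Set V))
    (K : ℝ) (c : ℕ) (ξ B : ℝ) : Prop where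
  connected : ∀ W ∈ 𝓗, (G.induce W).Connected
  qie : ∀ (W : Set V), W ∈ 𝓗 → ∀ (u v : V) (hu : u ∈ W) (hv : v ∈ W),
    ((G.induce W).dist ⟨u, hu⟩ ⟨v, hv⟩ : ℝ) ≤ K * (G.dist u v : ℝ) + K
  proj : ∀ W₁ ∈ 𝓗, ∀ W₂ ∈ 𝓗,
    (∀ p ∈ gProjSetOf G W₁ W₂, ∀ q ∈ gProjSetOf G W₁ W₂, (G.dist p q : ℝ) ≤ ξ) ∨
    ∃ U ∈ 𝓗, U ⊆ W₁ ∧ GHausBound G B (gProjSetOf G W₁ W₂) U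
  deep : ∀ W₁ ∈ 𝓗, ∀ W₂ ∈ 𝓗,
    GHausBound G B (gProjSetOf G W₁ W₂) W₁ → W₁ ⊆ W₂
  chains : ∀ (n : ℕ) (f : Fin (n + 1) → Set V), (∀ i, f i ∈ 𝓗) →
    (∀ i : Fin n, f i.castSucc ⊂ f i.succ) → n + 1 ≤ c
  rigid : ∀ W₁ ∈ 𝓗, ∀ W₂ ∈ 𝓗, (∃ d : ℝ, GHausBound G d W₁ W₂) → W₁ = W₂

/-! In the first alternative of the projection axiom, `π_F(W)` is already `ξ`-bounded in `F`,
hence bounded in `F̂` because `F` is quasi-isometrically embedded. In the second it is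
`B`-close to some `U ∈ 𝓗` with `U ⊆ F`: if `U = F` the deep-projection axiom gives `F ⊆ W`,
otherwise `U` is coned off in `F̂`, so any two points of `π_F(W)` are joined in `F̂` through
two `B`-short hops to `U` and one cone edge. -/

lemma SimpleGraph.Reachable.dist_map_le {V W : Type*} {G : SimpleGraph V} {H : SimpleGraph W}
    (f : G →g H) {u v : V} (h : G.Reachable u v) : H.dist (f u) (f v) ≤ G.dist u v := by
  obtain ⟨p, hp⟩ := h.exists_walk_length_eq_dist
  simpa only [Walk.length_map, hp] using dist_le (p.map f)

section ConeOff

variable {V : Type u} {G : SimpleGraph V} {𝓗 : Set (Set V)}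

lemma gProjSetOf_subset (G : SimpleGraph V) (W S : Set V) : gProjSetOf G W S ⊆ W :=
  Set.iUnion₂_subset fun _ _ _ hw => hw.1

def induceHomHatG (G : SimpleGraph V) (𝓗 : Set (Set V)) (F : Set V) :
    G.induce F →g hatG G 𝓗 F :=
  ⟨Subtype.val, fun {a b} hab => ⟨a.2, b.2, Or.inl hab⟩⟩

lemma hatG_reachable {F : Set V} (hF : (G.induce F).Connected) {u v : V} (hu : u ∈ F)
    (hv : v ∈ F) : (hatG G 𝓗 F).Reachable u v :=
  (hF ⟨u, hu⟩ ⟨v, hv⟩).map (induceHomHatG G 𝓗 F)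

lemma hatG_dist_le_one {F U : Set V} (hU : U ∈ 𝓗) (hUF : U ⊂ F) {a b : V} (ha : a ∈ U)
    (hb : b ∈ U) : (hatG G 𝓗 F).dist a b ≤ 1 := by
  rcases eq_or_ne a b with rfl | hne
  · simp
  · have hadj : (hatG G 𝓗 F).Adj a b := ⟨hUF.1 ha, hUF.1 hb, Or.inr ⟨hne, U, hU, hUF, ha, hb⟩⟩
    exact dist_le hadj.toWalk

namespace FactorSystem

variable {K : ℝ} {c : ℕ} {ξ B : ℝ}

lemma K_nonneg (hFS : FactorSystem G 𝓗 K c ξ B) {F : Set V} (hF : F ∈ 𝓗) : 0 ≤ K := by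
  obtain ⟨⟨x, hx⟩⟩ := (hFS.connected F hF).nonempty
  simpa using hFS.qie F hF x x hx hx

lemma hatG_dist_le (hFS : FactorSystem G 𝓗 K c ξ B) {F : Set V} (hF : F ∈ 𝓗) {u v : V}
    (hu : u ∈ F) (hv : v ∈ F) :
    ((hatG G 𝓗 F).dist u v : ℝ) ≤ K * G.dist u v + K := by
  have hmap := (hFS.connected F hF ⟨u, hu⟩ ⟨v, hv⟩).dist_map_le (induceHomHatG G 𝓗 F)
  exact (Nat.cast_le.mpr hmap).trans (hFS.qie F hF u v hu hv)

lemma hatG_dist_le_of_dist_le (hFS : FactorSystem G 𝓗 K c ξ B) {F : Set V} (hF : F ∈ 𝓗)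
    {u v : V} (hu : u ∈ F) (hv : v ∈ F) {r : ℝ} (huv : (G.dist u v : ℝ) ≤ r) :
    ((hatG G 𝓗 F).dist u v : ℝ) ≤ K * r + K := by
  have := mul_le_mul_of_nonneg_left huv (hFS.K_nonneg hF)
  linarith [hFS.hatG_dist_le hF hu hv]

lemma hatG_dist_le_of_hausBound (hFS : FactorSystem G 𝓗 K c ξ B) {F U S : Set V}
    (hF : F ∈ 𝓗) (hU : U ∈ 𝓗) (hUF : U ⊂ F) (hSF : S ⊆ F) (hSU : GHausBound G B S U)
    {u v : V} (hu : u ∈ S) (hv : v ∈ S) :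
    ((hatG G 𝓗 F).dist u v : ℝ) ≤ 2 * (K * B + K) + 1 := by
  obtain ⟨a, haU, hua⟩ := hSU.1 u hu
  obtain ⟨b, hbU, hvb⟩ := hSU.1 v hv
  have reach : ∀ {x y : V}, x ∈ F → y ∈ F → (hatG G 𝓗 F).Reachable x y :=
    hatG_reachable (hFS.connected F hF)
  have htri : (hatG G 𝓗 F).dist u v ≤
      (hatG G 𝓗 F).dist u a + (hatG G 𝓗 F).dist a b + (hatG G 𝓗 F).dist b v := by
    have h₁ := (reach (hSF hu) (hUF.1 haU)).dist_triangle_left v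
    have h₂ := (reach (hUF.1 haU) (hUF.1 hbU)).dist_triangle_left v
    omega
  have hua' := hFS.hatG_dist_le_of_dist_le hF (hSF hu) (hUF.1 haU) hua
  have hbv' := hFS.hatG_dist_le_of_dist_le hF (hUF.1 hbU) (hSF hv) (r := B)
    (by rwa [dist_comm])
  have hab : ((hatG G 𝓗 F).dist a b : ℝ) ≤ 1 := by exact_mod_cast hatG_dist_le_one hU hUF haU hbU
  have htri' : ((hatG G 𝓗 F).dist u v : ℝ) ≤
      (hatG G 𝓗 F).dist u a + (hatG G 𝓗 F).dist a b + (hatG G 𝓗 F).dist b v := by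
    exact_mod_cast htri
  linarith

end FactorSystem

end ConeOff

/-- Proposition 3.12, bounded projections: either the projection
`π_F(W)` has uniformly bounded diameter in `F̂`, or `F ⊆ W`. -/
theorem bounded_projections : ∀ (δ K : ℝ) (c : ℕ) (ξ B : ℝ), 0 < δ → ∃ Θ : ℝ,
    ∀ (V : Type u) (G : SimpleGraph V) (𝓗 : Set (Set V)),
      G.Connected → GraphHyperbolic G δ → FactorSystem G 𝓗 K c ξ B →
      ∀ F ∈ 𝓗, ∀ W ∈ 𝓗,
        (∀ u ∈ gProjSetOf G F W, ∀ v ∈ gProjSetOf G F W,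
          ((hatG G 𝓗 F).dist u v : ℝ) ≤ Θ) ∨ F ⊆ W := by
  intro δ K c ξ B _
  refine ⟨max (K * ξ + K) (2 * (K * B + K) + 1), fun V G 𝓗 _ _ hFS F hF W hW => ?_⟩
  have hSF := gProjSetOf_subset G F W
  rcases hFS.proj F hF W hW with hsmall | ⟨U, hU, hUF, hHaus⟩
  · exact .inl fun u hu v hv =>
      (hFS.hatG_dist_le_of_dist_le hF (hSF hu) (hSF hv) (hsmall u hu v hv)).trans
        (le_max_left _ _)
  · rcases hUF.eq_or_ssubset with rfl | hUF
    · exact .inr (hFS.deep U hU W hW hHaus)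
    · exact .inl fun u hu v hv =>
        (hFS.hatG_dist_le_of_hausBound hF hU hUF hSF hHaus hu hv).trans (le_max_right _ _)
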